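/- arXiv:1602.04609 — 4 statements merged into one kernel-verified Lean document; each statement's English description precedes it below -/
import Mathlib

section
/- Let Φ(v,θ,y)(du) = r(u,v,θ,y)/r(λ,v,θ,y) λ(du) be the Bayes operator and Φ_N(v,θ,y)(du) = r(u,v,θ,y)/r(λ_N,v,θ,y) λ_N(du) its quantized approximation. Under the boundedness assumption r ≤ r̄, the Lipschitz assumption with constant L_r, and the lower bound r(λ,v,x,y) ≥ δ⁻¹, if ε_N ≤ 1/(2 δ L_r), then for every θ ∈ P(X) and y ∈ Y, E[d_P(Φ(Y,θ,y), Φ_N(Y,θ,y))] ≤ δ[(2δ+1)L_r + r̄] ε_N, where Y has law ν and d_P is the dual bounded-Lipschitz distance sup over f ∈ Lip₁ of |∫f dμ − ∫f dμ'|. -/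
open MeasureTheory Set
open scoped ENNReal NNReal
noncomputable section

abbrev Em (m : ℕ) := EuclideanSpace ℝ (Fin m)

/-- bounded Lipschitz functions with `‖f‖_sup + Lip f ≤ 1` -/
def IsLip1 {E : Type*} [PseudoMetricSpace E] (f : E → ℝ) : Prop :=
  ∃ C L : ℝ, 0 ≤ C ∧ 0 ≤ L ∧ (∀ x, |f x| ≤ C) ∧
    (∀ x y, |f x - f y| ≤ L * dist x y) ∧ C + L ≤ 1

/-- dual bounded-Lipschitz distance on probability measures -/
noncomputable def dP {E : Type*} [PseudoMetricSpace E] [MeasurableSpace E]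
    (μ ν : Measure E) : ℝ :=
  ⨆ f : {f : E → ℝ // IsLip1 f}, (∫ x, f.1 x ∂μ - ∫ x, f.1 x ∂ν)

lemma isLip1_zero {E : Type*} [PseudoMetricSpace E] : IsLip1 (fun _ : E => (0:ℝ)) :=
  ⟨0, 0, le_refl _, le_refl _, fun _ => by simp, fun _ _ => by simp, by norm_num⟩

lemma integrable_of_bdd {α : Type*} [MeasurableSpace α] {μ : Measure α} [IsFiniteMeasure μ]
    {h : α → ℝ} (hm : AEStronglyMeasurable h μ) {M : ℝ} (hb : ∀ a, |h a| ≤ M) :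
    Integrable h μ :=
  (integrable_const M).mono' hm (ae_of_all _ fun a => by
    simpa [Real.norm_eq_abs] using hb a)

lemma abs_integral_sub_le {α : Type*} [MeasurableSpace α] {μ : Measure α}
    [IsProbabilityMeasure μ] {h h' : α → ℝ} (hi : Integrable h μ) (hi' : Integrable h' μ)
    {K : ℝ} (hb : ∀ a, |h a - h' a| ≤ K) :
    |(∫ a, h a ∂μ) - ∫ a, h' a ∂μ| ≤ K := by
  rw [← integral_sub hi hi']
  calc |∫ a, (h a - h' a) ∂μ| ≤ ∫ a, |h a - h' a| ∂μ := by
        simpa [Real.norm_eq_abs] using norm_integral_le_integral_norm (fun a => h a - h' a) (μ := μ)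
    _ ≤ ∫ _a, K ∂μ := integral_mono (hi.sub hi').abs (integrable_const _) fun a => hb a
    _ = K := by simp

/-- given the quantization hypothesis `hW` for 1-Lipschitz functions, scale to
`K`-Lipschitz functions. -/
lemma hW_scaled {m : ℕ} {lam lamN : Measure (Em m)}
    [IsProbabilityMeasure lam] [IsProbabilityMeasure lamN] {εN : ℝ}
    (hW : ∀ f : Em m → ℝ, (∀ a b, |f a - f b| ≤ dist a b) →
      |(∫ u, f u ∂lam) - ∫ u, f u ∂lamN| ≤ εN)
    {K : ℝ} (hK : 0 ≤ K) (h : Em m → ℝ)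
    (hlip : ∀ a b, |h a - h b| ≤ K * dist a b) :
    |(∫ u, h u ∂lam) - ∫ u, h u ∂lamN| ≤ K * εN := by
  rcases eq_or_lt_of_le hK with hK0 | hKpos
  · -- K = 0 : h is constant
    have hc : ∀ a, h a = h 0 := by
      intro a
      have := hlip a 0
      rw [← hK0] at this
      simp only [zero_mul] at this
      have : |h a - h 0| = 0 := le_antisymm this (abs_nonneg _)
      linarith [abs_eq_zero.mp this]
    have h1 : (∫ u, h u ∂lam) = h 0 := by
      rw [show h = fun _ => h 0 from funext hc]; simp
    have h2 : (∫ u, h u ∂lamN) = h 0 := by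
      rw [show h = fun _ => h 0 from funext hc]; simp
    rw [h1, h2, sub_self, abs_zero, ← hK0, zero_mul]
  · have key := hW (fun a => K⁻¹ * h a) (fun a b => by
      rw [← mul_sub, abs_mul, abs_of_pos (inv_pos.mpr hKpos)]
      rw [inv_mul_le_iff₀ hKpos]
      exact hlip a b)
    rw [integral_const_mul, integral_const_mul, ← mul_sub, abs_mul,
      abs_of_pos (inv_pos.mpr hKpos), inv_mul_le_iff₀ hKpos] at key
    linarith [key]

lemma integral_lip {α E : Type*} [MeasurableSpace α] [PseudoMetricSpace E] {μ : Measure α}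
    [IsProbabilityMeasure μ] {h : E → α → ℝ} {K : ℝ}
    (hint : ∀ e, Integrable (h e) μ)
    (hlip : ∀ e e' a, |h e a - h e' a| ≤ K * dist e e') :
    ∀ e e', |(∫ a, h e a ∂μ) - ∫ a, h e' a ∂μ| ≤ K * dist e e' := fun e e' =>
  abs_integral_sub_le (hint e) (hint e') (hlip e e')

lemma lip_continuous {E : Type*} [PseudoMetricSpace E] {f : E → ℝ} {L : ℝ} (hL : 0 ≤ L)
    (hlip : ∀ a b, |f a - f b| ≤ L * dist a b) : Continuous f := by
  refine (LipschitzWith.of_dist_le_mul (K := L.toNNReal) fun a b => ?_).continuous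
  rw [Real.dist_eq, Real.coe_toNNReal _ hL]
  exact hlip a b

/-- the core per-test-function estimate -/
lemma key_aux {m : ℕ} {Lr εN δ rbar : ℝ} (hLr : 0 < Lr) (hδ1 : 1 ≤ δ)
    (hεN0 : 0 ≤ εN) (hrbar : 0 < rbar)
    {lam lamN : Measure (Em m)} [IsProbabilityMeasure lam] [IsProbabilityMeasure lamN]
    (g : Em m → ℝ) (hg0 : ∀ u, 0 ≤ g u) (hgb : ∀ u, g u ≤ rbar)
    (hglip : ∀ a b, |g a - g b| ≤ Lr * dist a b)
    (hZ : δ⁻¹ ≤ ∫ u, g u ∂lam)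
    (hW : ∀ f : Em m → ℝ, (∀ a b, |f a - f b| ≤ dist a b) →
      |(∫ u, f u ∂lam) - ∫ u, f u ∂lamN| ≤ εN)
    (hεN : Lr * εN ≤ 1 / (2 * δ))
    (f : Em m → ℝ) (hf : IsLip1 f) :
    (∫ x, f x ∂(lam.withDensity fun u => ENNReal.ofReal (g u / ∫ u', g u' ∂lam)))
      - (∫ x, f x ∂(lamN.withDensity fun u => ENNReal.ofReal (g u / ∫ u', g u' ∂lamN)))
      ≤ δ * ((2 * δ + 1) * Lr + rbar) * εN := by
  obtain ⟨C, L, hC0, hL0, hfb, hflip, hCL⟩ := hf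
  have hδ0 : (0:ℝ) < δ := lt_of_lt_of_le one_pos hδ1
  set Z : ℝ := ∫ u, g u ∂lam with hZdef
  set ZN : ℝ := ∫ u, g u ∂lamN with hZNdef
  have hfc : Continuous f := lip_continuous hL0 hflip
  have hgc : Continuous g := lip_continuous hLr.le hglip
  have hZpos : 0 < Z := lt_of_lt_of_le (inv_pos.mpr hδ0) hZ
  have hZZN : |Z - ZN| ≤ Lr * εN := hW_scaled hW hLr.le g hglip
  have hZN : 1 / (2 * δ) ≤ ZN := by
    have h1 := (abs_le.1 hZZN).2
    have h2 : δ⁻¹ - 1 / (2 * δ) = 1 / (2 * δ) := by field_simp; ring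
    linarith
  have hZNpos : 0 < ZN := lt_of_lt_of_le (by positivity) hZN
  -- integrability
  have hgint : ∀ (μ : Measure (Em m)) [IsProbabilityMeasure μ], Integrable g μ := by
    intro μ _
    exact integrable_of_bdd hgc.aestronglyMeasurable
      (M := rbar) fun u => abs_le.mpr ⟨by linarith [hg0 u, hrbar.le], hgb u⟩
  have hgfint : ∀ (μ : Measure (Em m)) [IsProbabilityMeasure μ],
      Integrable (fun u => g u * f u) μ := by
    intro μ _
    refine integrable_of_bdd (hgc.mul hfc).aestronglyMeasurable (M := rbar * C) fun u => ?_
    rw [abs_mul, abs_of_nonneg (hg0 u)]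
    exact mul_le_mul (hgb u) (hfb u) (abs_nonneg _) hrbar.le
  -- compute the two integrals
  have hcompute : ∀ (μ : Measure (Em m)) [IsProbabilityMeasure μ], ∀ W : ℝ, 0 < W →
      (∫ x, f x ∂(μ.withDensity fun u => ENNReal.ofReal (g u / W)))
        = W⁻¹ * ∫ u, g u * f u ∂μ := by
    intro μ _ W hW0
    have hm : Measurable fun u => (g u / W).toNNReal :=
      (hgc.measurable.div_const W).real_toNNReal
    rw [show (fun u => ENNReal.ofReal (g u / W))
        = fun u => ((g u / W).toNNReal : ℝ≥0∞) from rfl]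
    rw [integral_withDensity_eq_integral_smul hm f, ← integral_const_mul]
    refine integral_congr_ae (ae_of_all _ fun u => ?_)
    show (g u / W).toNNReal • f u = W⁻¹ * (g u * f u)
    rw [NNReal.smul_def, smul_eq_mul, Real.coe_toNNReal _ (div_nonneg (hg0 u) hW0.le),
      div_eq_mul_inv]
    ring
  rw [hcompute lam Z hZpos, hcompute lamN ZN hZNpos]
  set A : ℝ := ∫ u, g u * f u ∂lam with hAdef
  set AN : ℝ := ∫ u, g u * f u ∂lamN with hANdef
  -- estimates
  have hAAN : |A - AN| ≤ (C * Lr + L * rbar) * εN := by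
    refine hW_scaled hW (by positivity) _ fun a b => ?_
    have e : g a * f a - g b * f b = g a * (f a - f b) + f b * (g a - g b) := by ring
    rw [e]
    refine (abs_add_le _ _).trans ?_
    rw [abs_mul, abs_mul]
    have h1 : |g a| * |f a - f b| ≤ rbar * (L * dist a b) :=
      mul_le_mul (by rw [abs_of_nonneg (hg0 a)]; exact hgb a) (hflip a b)
        (abs_nonneg _) hrbar.le
    have h2 : |f b| * |g a - g b| ≤ C * (Lr * dist a b) :=
      mul_le_mul (hfb b) (hglip a b) (abs_nonneg _) hC0
    nlinarith [dist_nonneg (x := a) (y := b)]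
  have hANb : |AN| ≤ C * ZN := by
    calc |AN| ≤ ∫ u, |g u * f u| ∂lamN := by
          simpa only [Real.norm_eq_abs] using
            norm_integral_le_integral_norm (fun u => g u * f u) (μ := lamN)
      _ ≤ ∫ u, C * g u ∂lamN := by
          refine integral_mono (hgfint lamN).abs ((hgint lamN).const_mul C) fun u => ?_
          rw [abs_mul, abs_of_nonneg (hg0 u), mul_comm]
          exact mul_le_mul_of_nonneg_right (hfb u) (hg0 u)
      _ = C * ZN := integral_const_mul C g
  have hZinv : Z⁻¹ ≤ δ := by
    rw [show δ = (δ⁻¹)⁻¹ by rw [inv_inv]]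
    exact inv_anti₀ (inv_pos.mpr hδ0) hZ
  -- decomposition
  have e2 : Z⁻¹ * A - ZN⁻¹ * AN
      = Z⁻¹ * (A - AN) + ((ZN - Z) * (Z⁻¹ * ZN⁻¹)) * AN := by
    field_simp
    ring
  have t1 : |Z⁻¹ * (A - AN)| ≤ δ * ((C * Lr + L * rbar) * εN) := by
    rw [abs_mul, abs_of_pos (inv_pos.mpr hZpos)]
    exact mul_le_mul hZinv hAAN (abs_nonneg _) hδ0.le
  have t2 : |((ZN - Z) * (Z⁻¹ * ZN⁻¹)) * AN| ≤ δ * (C * (Lr * εN)) := by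
    rw [abs_mul, abs_mul, abs_of_pos (mul_pos (inv_pos.mpr hZpos) (inv_pos.mpr hZNpos)),
      abs_sub_comm]
    calc |Z - ZN| * (Z⁻¹ * ZN⁻¹) * |AN|
        ≤ (Lr * εN) * (Z⁻¹ * ZN⁻¹) * (C * ZN) := by
          refine mul_le_mul (mul_le_mul_of_nonneg_right hZZN (by positivity)) hANb
            (abs_nonneg _) (by positivity)
      _ = (Lr * εN) * Z⁻¹ * C * (ZN⁻¹ * ZN) := by ring
      _ = C * (Lr * εN) * Z⁻¹ := by rw [inv_mul_cancel₀ hZNpos.ne']; ring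
      _ ≤ C * (Lr * εN) * δ := by
          refine mul_le_mul_of_nonneg_left hZinv (by positivity)
      _ = δ * (C * (Lr * εN)) := by ring
  have hC1 : C ≤ 1 := by linarith
  have hL1 : L ≤ 1 := by linarith
  have hcoef : δ * ((C * Lr + L * rbar) * εN) + δ * (C * (Lr * εN))
      ≤ δ * ((2 * δ + 1) * Lr + rbar) * εN := by
    have key : 2 * C * Lr + L * rbar ≤ (2 * δ + 1) * Lr + rbar := by nlinarith
    nlinarith [mul_nonneg hδ0.le hεN0, mul_le_mul_of_nonneg_left key (mul_nonneg hδ0.le hεN0)]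
  calc Z⁻¹ * A - ZN⁻¹ * AN ≤ |Z⁻¹ * (A - AN)| + |((ZN - Z) * (Z⁻¹ * ZN⁻¹)) * AN| := by
        rw [e2]; exact (le_abs_self _).trans (abs_add_le _ _)
    _ ≤ δ * ((C * Lr + L * rbar) * εN) + δ * (C * (Lr * εN)) := add_le_add t1 t2
    _ ≤ δ * ((2 * δ + 1) * Lr + rbar) * εN := hcoef

theorem stmt_2 {m n : ℕ} (Lr εN δ rbar : ℝ) (hLr : 0 < Lr) (hδ : 0 < δ)
    (r : Em m → Em n → Em m → Em n → ℝ)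
    (lam lamN : Measure (Em m)) (nu : Measure (Em n))
    [IsProbabilityMeasure lam] [IsProbabilityMeasure lamN] [IsProbabilityMeasure nu]
    (hr_meas : Measurable fun p : (Em m × Em n) × Em m × Em n => r p.1.1 p.1.2 p.2.1 p.2.2)
    (hr_nonneg : ∀ u v x y, 0 ≤ r u v x y)
    (hr_bdd : ∀ u v x y, r u v x y ≤ rbar)
    (hr_lip : ∀ u u' v x x' y y',
      |r u v x y - r u' v x' y'| ≤ Lr * (dist u u' + dist x x' + dist y y'))
    (hr_int : ∀ x y, ∫ u, ∫ v, r u v x y ∂nu ∂lam = 1)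
    (hlow : ∀ (v : Em n) (x : Em m) (y : Em n), δ⁻¹ ≤ ∫ u, r u v x y ∂lam)
    (hW : ∀ f : Em m → ℝ, (∀ a b, |f a - f b| ≤ dist a b) →
      |(∫ u, f u ∂lam) - ∫ u, f u ∂lamN| ≤ εN)
    (hεN : εN ≤ 1 / (2 * δ * Lr)) :
    ∀ (θ : Measure (Em m)), IsProbabilityMeasure θ → ∀ y : Em n,
      (∫ v, dP
          (lam.withDensity fun u => ENNReal.ofReal
            ((∫ x, r u v x y ∂θ) / (∫ u', ∫ x, r u' v x y ∂θ ∂lam)))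
          (lamN.withDensity fun u => ENNReal.ofReal
            ((∫ x, r u v x y ∂θ) / (∫ u', ∫ x, r u' v x y ∂θ ∂lamN))) ∂nu)
        ≤ δ * ((2 * δ + 1) * Lr + rbar) * εN := by
  intro θ hθ y
  haveI := hθ
  have hδinv : (0:ℝ) < δ⁻¹ := inv_pos.mpr hδ
  have hεN0 : 0 ≤ εN := by
    have := hW (fun _ => 0) (fun a b => by simp [dist_nonneg])
    simpa using this
  -- measurability of sections of r
  have hsec_meas : ∀ (u : Em m) (v : Em n) (y' : Em n),
      Measurable fun x : Em m => r u v x y' := by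
    intro u v y'
    have h : Measurable fun x : Em m => (((u, v), (x, y')) : (Em m × Em n) × Em m × Em n) := by
      fun_prop
    exact hr_meas.comp h
  have hsec_meas' : ∀ (v : Em n) (x : Em m) (y' : Em n),
      Measurable fun u : Em m => r u v x y' := by
    intro v x y'
    have h : Measurable fun u : Em m => (((u, v), (x, y')) : (Em m × Em n) × Em m × Em n) := by
      fun_prop
    exact hr_meas.comp h
  have hrabs' : ∀ u v x y', |r u v x y'| ≤ max rbar 0 := fun u v x y' =>
    abs_le.mpr ⟨by linarith [hr_nonneg u v x y', le_max_right rbar 0],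
      le_trans (hr_bdd u v x y') (le_max_left _ _)⟩
  -- integrability of sections
  have hint_lam : ∀ (μ : Measure (Em m)) [IsProbabilityMeasure μ],
      ∀ v x y', Integrable (fun u => r u v x y') μ := fun μ _ v x y' =>
    integrable_of_bdd (hsec_meas' v x y').aestronglyMeasurable fun u => hrabs' u v x y'
  have hint_th : ∀ u v y', Integrable (fun x => r u v x y') θ := fun u v y' =>
    integrable_of_bdd (hsec_meas u v y').aestronglyMeasurable fun x => hrabs' u v x y'
  -- rbar is positive
  have hrbar0 : 0 < rbar := by
    refine lt_of_lt_of_le hδinv (le_trans (hlow 0 0 0) ?_)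
    calc (∫ u, r u 0 0 0 ∂lam) ≤ ∫ _u, rbar ∂lam :=
        integral_mono (hint_lam lam 0 0 0) (integrable_const _) fun u => hr_bdd u 0 0 0
      _ = rbar := by simp
  have hrabs : ∀ u v x y', |r u v x y'| ≤ rbar := fun u v x y' =>
    abs_le.mpr ⟨by linarith [hr_nonneg u v x y'], hr_bdd u v x y'⟩
  -- v ↦ ∫ u, r u v 0 0 ∂lam is measurable
  have hvmeas : AEStronglyMeasurable (fun v : Em n => ∫ u, r u v 0 0 ∂lam) nu := by
    have h : Measurable fun p : Em n × Em m =>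
        (((p.2, p.1), ((0 : Em m), (0 : Em n))) : (Em m × Em n) × Em m × Em n) := by
      fun_prop
    exact ((hr_meas.comp h).stronglyMeasurable.integral_prod_right').aestronglyMeasurable
  have hlam_lipx : ∀ (v : Em n) (y' : Em n) (x x' : Em m),
      |(∫ u, r u v x y' ∂lam) - ∫ u, r u v x' y' ∂lam| ≤ Lr * dist x x' := by
    intro v y'
    refine integral_lip (fun x => hint_lam lam v x y') (fun x x' u => ?_)
    have := hr_lip u u v x x' y' y'
    simpa using this
  -- Fubini: δ ≥ 1
  have hδ1 : (1:ℝ) ≤ δ := by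
    have hfint : Integrable (Function.uncurry fun u v => r u v 0 0) (lam.prod nu) := by
      refine integrable_of_bdd ?_ (M := rbar) (fun p => hrabs p.1 p.2 0 0)
      have h : Measurable fun p : Em m × Em n =>
          (((p.1, p.2), ((0 : Em m), (0 : Em n))) : (Em m × Em n) × Em m × Em n) := by
        fun_prop
      exact (hr_meas.comp h).aestronglyMeasurable
    have hswap : (∫ u, ∫ v, r u v 0 0 ∂nu ∂lam) = ∫ v, ∫ u, r u v 0 0 ∂lam ∂nu :=
      integral_integral_swap hfint
    have hone : (∫ v, ∫ u, r u v 0 0 ∂lam ∂nu) = 1 := by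
      rw [← hswap]; exact hr_int 0 0
    have hmono : δ⁻¹ ≤ ∫ v, ∫ u, r u v 0 0 ∂lam ∂nu := by
      have : (∫ _v, δ⁻¹ ∂nu) ≤ ∫ v, ∫ u, r u v 0 0 ∂lam ∂nu := by
        refine integral_mono (integrable_const _) ?_ fun v => hlow v 0 0
        refine integrable_of_bdd hvmeas (M := rbar) fun v => ?_
        rw [abs_of_nonneg (integral_nonneg fun u => hr_nonneg u v 0 0)]
        calc (∫ u, r u v 0 0 ∂lam) ≤ ∫ _u, rbar ∂lam :=
            integral_mono (hint_lam lam v 0 0) (integrable_const _) fun u => hr_bdd u v 0 0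
          _ = rbar := by simp
      simpa using this
    have h1 : δ⁻¹ ≤ 1 := hone ▸ hmono
    nlinarith [mul_le_mul_of_nonneg_left h1 hδ.le, mul_inv_cancel₀ hδ.ne']
  have hεN' : Lr * εN ≤ 1 / (2 * δ) := by
    have h := mul_le_mul_of_nonneg_left hεN hLr.le
    have he : Lr * (1 / (2 * δ * Lr)) = 1 / (2 * δ) := by
      field_simp
    linarith
  -- per-v data
  have hg0 : ∀ v u, 0 ≤ ∫ x, r u v x y ∂θ := fun v u =>
    integral_nonneg fun x => hr_nonneg u v x y
  have hgb : ∀ v u, (∫ x, r u v x y ∂θ) ≤ rbar := by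
    intro v u
    calc (∫ x, r u v x y ∂θ) ≤ ∫ _x, rbar ∂θ :=
        integral_mono (hint_th u v y) (integrable_const _) fun x => hr_bdd u v x y
      _ = rbar := by simp
  have hglip : ∀ v (a b : Em m),
      |(∫ x, r a v x y ∂θ) - ∫ x, r b v x y ∂θ| ≤ Lr * dist a b := by
    intro v
    refine integral_lip (fun u => hint_th u v y) (fun a b x => ?_)
    have := hr_lip a b v x x y y
    simpa using this
  have hZlow : ∀ v, δ⁻¹ ≤ ∫ u, ∫ x, r u v x y ∂θ ∂lam := by
    intro v
    have hfint : Integrable (Function.uncurry fun u x => r u v x y) (lam.prod θ) := by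
      refine integrable_of_bdd ?_ (M := rbar) (fun p => hrabs p.1 v p.2 y)
      have h : Measurable fun p : Em m × Em m =>
          (((p.1, v), (p.2, y)) : (Em m × Em n) × Em m × Em n) := by
        fun_prop
      exact (hr_meas.comp h).aestronglyMeasurable
    rw [integral_integral_swap hfint]
    have : (∫ _x, δ⁻¹ ∂θ) ≤ ∫ x, ∫ u, r u v x y ∂lam ∂θ := by
      refine integral_mono (integrable_const _) ?_ fun x => hlow v x y
      refine integrable_of_bdd ?_ (M := rbar) fun x => ?_
      · exact (lip_continuous hLr.le (fun a b => hlam_lipx v y a b)).aestronglyMeasurable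
      · rw [abs_of_nonneg (integral_nonneg fun u => hr_nonneg u v x y)]
        calc (∫ u, r u v x y ∂lam) ≤ ∫ _u, rbar ∂lam :=
            integral_mono (hint_lam lam v x y) (integrable_const _) fun u => hr_bdd u v x y
          _ = rbar := by simp
    simpa using this
  -- bound each dP term
  haveI : Nonempty {f : Em m → ℝ // IsLip1 f} := ⟨⟨fun _ => 0, isLip1_zero⟩⟩
  have hbound : ∀ v : Em n,
      dP (lam.withDensity fun u => ENNReal.ofReal
            ((∫ x, r u v x y ∂θ) / (∫ u', ∫ x, r u' v x y ∂θ ∂lam)))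
         (lamN.withDensity fun u => ENNReal.ofReal
            ((∫ x, r u v x y ∂θ) / (∫ u', ∫ x, r u' v x y ∂θ ∂lamN)))
        ≤ δ * ((2 * δ + 1) * Lr + rbar) * εN := by
    intro v
    refine ciSup_le fun f => ?_
    exact key_aux hLr hδ1 hεN0 hrbar0 (fun u => ∫ x, r u v x y ∂θ)
      (hg0 v) (hgb v) (hglip v) (hZlow v) hW hεN' f.1 f.2
  have hnn : ∀ v : Em n,
      0 ≤ dP (lam.withDensity fun u => ENNReal.ofReal
            ((∫ x, r u v x y ∂θ) / (∫ u', ∫ x, r u' v x y ∂θ ∂lam)))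
         (lamN.withDensity fun u => ENNReal.ofReal
            ((∫ x, r u v x y ∂θ) / (∫ u', ∫ x, r u' v x y ∂θ ∂lamN))) := by
    intro v
    have hbdd : BddAbove (Set.range fun f : {f : Em m → ℝ // IsLip1 f} =>
        (∫ x, f.1 x ∂(lam.withDensity fun u => ENNReal.ofReal
            ((∫ x, r u v x y ∂θ) / (∫ u', ∫ x, r u' v x y ∂θ ∂lam))))
          - ∫ x, f.1 x ∂(lamN.withDensity fun u => ENNReal.ofReal
            ((∫ x, r u v x y ∂θ) / (∫ u', ∫ x, r u' v x y ∂θ ∂lamN)))) := by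
      refine ⟨δ * ((2 * δ + 1) * Lr + rbar) * εN, ?_⟩
      rintro b ⟨f, rfl⟩
      exact key_aux hLr hδ1 hεN0 hrbar0 (fun u => ∫ x, r u v x y ∂θ)
        (hg0 v) (hgb v) (hglip v) (hZlow v) hW hεN' f.1 f.2
    refine le_ciSup_of_le hbdd ⟨fun _ => 0, isLip1_zero⟩ ?_
    simp
  have hB0 : 0 ≤ δ * ((2 * δ + 1) * Lr + rbar) * εN := by positivity
  calc (∫ v, dP
          (lam.withDensity fun u => ENNReal.ofReal
            ((∫ x, r u v x y ∂θ) / (∫ u', ∫ x, r u' v x y ∂θ ∂lam)))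
          (lamN.withDensity fun u => ENNReal.ofReal
            ((∫ x, r u v x y ∂θ) / (∫ u', ∫ x, r u' v x y ∂θ ∂lamN))) ∂nu)
      ≤ ∫ _v, δ * ((2 * δ + 1) * Lr + rbar) * εN ∂nu :=
        integral_mono_of_nonneg (ae_of_all _ hnn) (integrable_const _) (ae_of_all _ hbound)
    _ = δ * ((2 * δ + 1) * Lr + rbar) * εN := by simp
end
end

section
/- For f ∈ Lip₁(X) (bounded Lipschitz with ‖f‖_sup + Lip(f) ≤ 1) and any v ∈ Y, θ,θ' ∈ P(X), y,y' ∈ Y, under the assumptions r ≤ r̄, r Lipschitz with constant L_r, and r(λ,v,x,y) ≥ δ⁻¹, one has |∫ f dΦ(v,θ,y) − ∫ f dΦ(v,θ',y')| ≤ δ(r̄ + L_r)(1 + δ r̄)[d_P(θ,θ') + |y − y'|], where Φ(v,θ,y)(du) = r(u,v,θ,y)/r(λ,v,θ,y) λ(du). -/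
/-!
Write `g u = ∫ r(u,v,x,y) θ(dx)` and `Z = ∫ g dλ`, so that the quantity to estimate is `A / Z` with
`A = ∫ f g dλ`. For fixed `u`, the function `x ↦ r(u,v,x,y) / (r̄ + L_r)` lies in `Lip₁`, so
replacing `θ` by `θ'` moves `g u` by at most `(r̄ + L_r) d_P(θ,θ')`, and replacing `y` by `y'` moves
it by at most `L_r |y - y'|`. Hence `|g - g'| ≤ D := (r̄ + L_r)(d_P(θ,θ') + |y - y'|)` uniformly, and
both `|A - A'|` and `|Z - Z'|` are at most `D`. By Fubini and the lower bound on `r(λ,v,x,y)`,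
`Z, Z' ≥ δ⁻¹`; with `|A'| ≤ r̄` the identity `A/Z - A'/Z' = (A - A')/Z + A'(Z' - Z)/(Z Z')` gives
the bound `δ D + δ² r̄ D`.
-/

open MeasureTheory Set
noncomputable section

lemma abs_div_sub_div_le_of_inv_le {A A' Z Z' c δ D : ℝ} (hδ : 0 < δ) (hZ : δ⁻¹ ≤ Z)
    (hZ' : δ⁻¹ ≤ Z') (hA' : |A'| ≤ c) (hAA' : |A - A'| ≤ D) (hZZ' : |Z' - Z| ≤ D) :
    |A / Z - A' / Z'| ≤ δ * (1 + δ * c) * D := by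
  have hZ_pos : 0 < Z := (inv_pos.2 hδ).trans_le hZ
  have hZ'_pos : 0 < Z' := (inv_pos.2 hδ).trans_le hZ'
  have hZ_inv : |Z⁻¹| ≤ δ := by
    rw [abs_of_pos (inv_pos.2 hZ_pos)]; exact inv_le_of_inv_le₀ hδ hZ
  have hZ'_inv : |Z'⁻¹| ≤ δ := by
    rw [abs_of_pos (inv_pos.2 hZ'_pos)]; exact inv_le_of_inv_le₀ hδ hZ'
  have hD : 0 ≤ D := (abs_nonneg _).trans hAA'
  have hc : 0 ≤ c := (abs_nonneg _).trans hA'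
  have hsplit : A / Z - A' / Z' = (A - A') * Z⁻¹ + A' * (Z' - Z) * Z⁻¹ * Z'⁻¹ := by
    field_simp; ring
  calc |A / Z - A' / Z'|
      ≤ |A - A'| * |Z⁻¹| + |A'| * |Z' - Z| * |Z⁻¹| * |Z'⁻¹| := by
        rw [hsplit, ← abs_mul, ← abs_mul, ← abs_mul, ← abs_mul]; exact abs_add_le _ _
    _ ≤ D * δ + c * D * δ * δ := by gcongr
    _ = δ * (1 + δ * c) * D := by ring

lemma continuous_of_abs_sub_le_mul_dist {X : Type*} [PseudoMetricSpace X] {g : X → ℝ} {L : ℝ}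
    (hL : 0 ≤ L) (hg : ∀ x x', |g x - g x'| ≤ L * dist x x') : Continuous g :=
  (LipschitzWith.of_dist_le_mul (K := L.toNNReal) fun x x' => by
    rw [Real.dist_eq, Real.coe_toNNReal L hL]; exact hg x x').continuous

section Integral

variable {α : Type*} [MeasurableSpace α] {μ : Measure α} [IsProbabilityMeasure μ]

lemma abs_integral_le_of_forall_abs_le {F : α → ℝ} {C : ℝ} (h : ∀ x, |F x| ≤ C) :
    |∫ x, F x ∂μ| ≤ C := by
  simpa using norm_integral_le_of_norm_le_const (μ := μ) (f := F)
    (ae_of_all _ fun x => by rw [Real.norm_eq_abs]; exact h x)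

lemma abs_integral_sub_le_of_forall_abs_sub_le {F G : α → ℝ} {D : ℝ} (hF : Integrable F μ)
    (hG : Integrable G μ) (h : ∀ x, |F x - G x| ≤ D) :
    |∫ x, F x ∂μ - ∫ x, G x ∂μ| ≤ D := by
  rw [← integral_sub hF hG]
  exact abs_integral_le_of_forall_abs_le h

lemma abs_integral_mul_div_integral_sub_le {f g g' : α → ℝ} {c δ D : ℝ}
    (hf : AEStronglyMeasurable f μ) (hf_le : ∀ x, |f x| ≤ 1) (hg : Integrable g μ)
    (hg' : Integrable g' μ) (hg'_le : ∀ x, |g' x| ≤ c) (hgg' : ∀ x, |g x - g' x| ≤ D)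
    (hδ : 0 < δ) (hZ : δ⁻¹ ≤ ∫ x, g x ∂μ) (hZ' : δ⁻¹ ≤ ∫ x, g' x ∂μ) :
    |∫ x, f x * (g x / ∫ x', g x' ∂μ) ∂μ - ∫ x, f x * (g' x / ∫ x', g' x' ∂μ) ∂μ| ≤
      δ * (1 + δ * c) * D := by
  have hf_norm : ∀ᵐ x ∂μ, ‖f x‖ ≤ 1 := ae_of_all _ hf_le
  simp only [← mul_div_assoc, integral_div]
  refine abs_div_sub_div_le_of_inv_le hδ hZ hZ' ?_ ?_ ?_
  · refine abs_integral_le_of_forall_abs_le fun x => ?_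
    rw [abs_mul]
    exact mul_le_of_le_one_left (abs_nonneg _) (hf_le x) |>.trans (hg'_le x)
  · refine abs_integral_sub_le_of_forall_abs_sub_le (hg.bdd_mul hf hf_norm)
      (hg'.bdd_mul hf hf_norm) fun x => ?_
    rw [← mul_sub, abs_mul]
    exact mul_le_of_le_one_left (abs_nonneg _) (hf_le x) |>.trans (hgg' x)
  · rw [abs_sub_comm]
    exact abs_integral_sub_le_of_forall_abs_sub_le hg hg' hgg'

lemma le_integral_integral_of_forall_le {β : Type*} [MeasurableSpace β] {ν : Measure β}
    [IsProbabilityMeasure ν] {F : α → β → ℝ} {b : ℝ}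
    (hF : Integrable (Function.uncurry F) (μ.prod ν)) (h : ∀ y, b ≤ ∫ x, F x y ∂μ) :
    b ≤ ∫ x, ∫ y, F x y ∂ν ∂μ := by
  rw [integral_integral_swap hF]
  calc b = ∫ _, b ∂ν := by simp
    _ ≤ ∫ y, ∫ x, F x y ∂μ ∂ν := integral_mono (integrable_const b) hF.integral_prod_right h

end Integral

section Lip1

variable {E : Type*} [PseudoMetricSpace E]

namespace IsLip1

variable {f : E → ℝ}

lemma abs_le_one (hf : IsLip1 f) (x : E) : |f x| ≤ 1 := by
  obtain ⟨C, L, -, hL, hC, -, hCL⟩ := hf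
  linarith [hC x]

lemma continuous (hf : IsLip1 f) : Continuous f := by
  obtain ⟨-, L, -, hL, -, hlip, -⟩ := hf
  exact continuous_of_abs_sub_le_mul_dist hL hlip

lemma neg (hf : IsLip1 f) : IsLip1 (fun x => -f x) := by
  obtain ⟨C, L, hC, hL, hbdd, hlip, hCL⟩ := hf
  refine ⟨C, L, hC, hL, fun x => by simpa using hbdd x, fun x y => ?_, hCL⟩
  rw [neg_sub_neg, abs_sub_comm]
  exact hlip x y

variable [MeasurableSpace E] {μ ν : Measure E} [IsProbabilityMeasure μ] [IsProbabilityMeasure ν]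

lemma integral_sub_le_dP (hf : IsLip1 f) : ∫ x, f x ∂μ - ∫ x, f x ∂ν ≤ dP μ ν := by
  refine le_ciSup (f := fun g : {g : E → ℝ // IsLip1 g} => ∫ x, g.1 x ∂μ - ∫ x, g.1 x ∂ν)
    ⟨2, ?_⟩ ⟨f, hf⟩
  rintro _ ⟨g, rfl⟩
  have hμ := abs_integral_le_of_forall_abs_le (μ := μ) g.2.abs_le_one
  have hν := abs_integral_le_of_forall_abs_le (μ := ν) g.2.abs_le_one
  linarith [le_abs_self (∫ x, g.1 x ∂μ), neg_abs_le (∫ x, g.1 x ∂ν)]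

lemma abs_integral_sub_le_dP (hf : IsLip1 f) : |∫ x, f x ∂μ - ∫ x, f x ∂ν| ≤ dP μ ν := by
  refine abs_sub_le_iff.2 ⟨hf.integral_sub_le_dP, ?_⟩
  have := hf.neg.integral_sub_le_dP (μ := μ) (ν := ν)
  rw [integral_neg, integral_neg] at this
  linarith

end IsLip1

variable [MeasurableSpace E] {μ ν : Measure E} [IsProbabilityMeasure μ] [IsProbabilityMeasure ν]

lemma abs_integral_sub_le_mul_dP {f : E → ℝ} {a b : ℝ} (ha : 0 ≤ a) (hb : 0 ≤ b)
    (hab : 0 < a + b) (hf_le : ∀ x, |f x| ≤ a) (hf_lip : ∀ x x', |f x - f x'| ≤ b * dist x x') :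
    |∫ x, f x ∂μ - ∫ x, f x ∂ν| ≤ (a + b) * dP μ ν := by
  have hg : IsLip1 fun x => f x / (a + b) := by
    refine ⟨a / (a + b), b / (a + b), by positivity, by positivity, fun x => ?_, fun x x' => ?_,
      by rw [← add_div, div_self hab.ne']⟩
    · rw [abs_div, abs_of_pos hab]; gcongr; exact hf_le x
    · rw [← sub_div, abs_div, abs_of_pos hab, div_mul_eq_mul_div]; gcongr; exact hf_lip x x'
  have := hg.abs_integral_sub_le_dP (μ := μ) (ν := ν)
  rwa [integral_div, integral_div, ← sub_div, abs_div, abs_of_pos hab, div_le_iff₀' hab] at this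

end Lip1

section Kernel

variable {E F : Type*} [PseudoMetricSpace E] [PseudoMetricSpace F] {R : E → E → F → ℝ} {c L : ℝ}

lemma continuous_uncurry_of_abs_sub_le (hL : 0 ≤ L)
    (hR : ∀ u u' x x' y y', |R u x y - R u' x' y'| ≤ L * (dist u u' + dist x x' + dist y y'))
    (y : F) : Continuous fun p : E × E => R p.1 p.2 y := by
  refine continuous_of_abs_sub_le_mul_dist (L := 2 * L) (by positivity) fun p q => ?_
  calc |R p.1 p.2 y - R q.1 q.2 y| ≤ L * (dist p.1 q.1 + dist p.2 q.2 + dist y y) := hR ..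
    _ ≤ L * (dist p q + dist p q + 0) := by
        rw [dist_self, Prod.dist_eq]; gcongr <;> simp
    _ = 2 * L * dist p q := by ring

variable [MeasurableSpace E] [OpensMeasurableSpace E]

lemma integrable_prod_of_abs_sub_le [SecondCountableTopology E] {μ ν : Measure E}
    [IsFiniteMeasure μ] [IsFiniteMeasure ν] (hL : 0 ≤ L) (hR_abs : ∀ u x y, |R u x y| ≤ c)
    (hR : ∀ u u' x x' y y', |R u x y - R u' x' y'| ≤ L * (dist u u' + dist x x' + dist y y'))
    (y : F) : Integrable (fun p : E × E => R p.1 p.2 y) (μ.prod ν) :=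
  .of_bound (continuous_uncurry_of_abs_sub_le hL hR y).aestronglyMeasurable c
    (ae_of_all _ fun p => by rw [Real.norm_eq_abs]; exact hR_abs ..)

lemma abs_integral_sub_integral_le_mul_dP_add_dist {θ θ' : Measure E} [IsProbabilityMeasure θ]
    [IsProbabilityMeasure θ'] (hL : 0 < L) (hR_abs : ∀ u x y, |R u x y| ≤ c)
    (hR : ∀ u u' x x' y y', |R u x y - R u' x' y'| ≤ L * (dist u u' + dist x x' + dist y y'))
    (u : E) (y y' : F) :
    |∫ x, R u x y ∂θ - ∫ x, R u x y' ∂θ'| ≤ (c + L) * (dP θ θ' + dist y y') := by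
  have hc : 0 ≤ c := (abs_nonneg _).trans (hR_abs u u y)
  have hlip : ∀ y x x', |R u x y - R u x' y| ≤ L * dist x x' := fun y x x' => by
    simpa using hR u u x x' y y
  have hint : ∀ y, Integrable (fun x => R u x y) θ' := fun y =>
    .of_bound (continuous_of_abs_sub_le_mul_dist hL.le (hlip y)).aestronglyMeasurable c
      (ae_of_all _ fun x => by rw [Real.norm_eq_abs]; exact hR_abs u x y)
  have hθ : |∫ x, R u x y ∂θ - ∫ x, R u x y ∂θ'| ≤ (c + L) * dP θ θ' :=
    abs_integral_sub_le_mul_dP hc hL.le (by positivity) (hR_abs u · y) (hlip y)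
  have hy : |∫ x, R u x y ∂θ' - ∫ x, R u x y' ∂θ'| ≤ L * dist y y' :=
    abs_integral_sub_le_of_forall_abs_sub_le (hint y) (hint y') fun x => by
      simpa using hR u u x x y y'
  calc |∫ x, R u x y ∂θ - ∫ x, R u x y' ∂θ'|
      ≤ |∫ x, R u x y ∂θ - ∫ x, R u x y ∂θ'| + |∫ x, R u x y ∂θ' - ∫ x, R u x y' ∂θ'| :=
        abs_sub_le _ _ _
    _ ≤ (c + L) * dP θ θ' + L * dist y y' := add_le_add hθ hy
    _ ≤ (c + L) * (dP θ θ' + dist y y') := by nlinarith [dist_nonneg (x := y) (y := y')]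

end Kernel

theorem stmt_3_general {m n : ℕ} (Lr δ rbar : ℝ) (hLr : 0 < Lr) (hδ : 0 < δ)
    (r : Em m → Em n → Em m → Em n → ℝ)
    (lam : Measure (Em m)) [IsProbabilityMeasure lam]
    (hr_nonneg : ∀ u v x y, 0 ≤ r u v x y)
    (hr_bdd : ∀ u v x y, r u v x y ≤ rbar)
    (hr_lip : ∀ u u' v x x' y y',
      |r u v x y - r u' v x' y'| ≤ Lr * (dist u u' + dist x x' + dist y y'))
    (hlow : ∀ (v : Em n) (x : Em m) (y : Em n), δ⁻¹ ≤ ∫ u, r u v x y ∂lam) :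
    ∀ (f : Em m → ℝ), IsLip1 f →
    ∀ (v : Em n) (θ θ' : Measure (Em m)), IsProbabilityMeasure θ → IsProbabilityMeasure θ' →
    ∀ (y y' : Em n),
      |(∫ u, f u * ((∫ x, r u v x y ∂θ) / (∫ u', ∫ x, r u' v x y ∂θ ∂lam)) ∂lam) -
        ∫ u, f u * ((∫ x, r u v x y' ∂θ') / (∫ u', ∫ x, r u' v x y' ∂θ' ∂lam)) ∂lam|
        ≤ δ * (rbar + Lr) * (1 + δ * rbar) * (dP θ θ' + dist y y') := by
  intro f hf v θ θ' _ _ y y'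
  have hr_abs : ∀ u x y, |r u v x y| ≤ rbar := fun u x y =>
    abs_le.2 ⟨by linarith [hr_nonneg u v x y, hr_bdd u v x y], hr_bdd u v x y⟩
  have hr_lip_v := fun u u' x x' y y' => hr_lip u u' v x x' y y'
  have hprod : ∀ (θ₀ : Measure (Em m)) [IsProbabilityMeasure θ₀] (y₀ : Em n),
      Integrable (fun p : Em m × Em m => r p.1 v p.2 y₀) (lam.prod θ₀) := fun _ _ =>
    integrable_prod_of_abs_sub_le hLr.le hr_abs hr_lip_v
  have hZ : ∀ (θ₀ : Measure (Em m)) [IsProbabilityMeasure θ₀] (y₀ : Em n),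
      δ⁻¹ ≤ ∫ u, ∫ x, r u v x y₀ ∂θ₀ ∂lam := fun θ₀ _ y₀ =>
    le_integral_integral_of_forall_le (hprod θ₀ y₀) (hlow v · y₀)
  refine (abs_integral_mul_div_integral_sub_le hf.continuous.aestronglyMeasurable hf.abs_le_one
    (hprod θ y).integral_prod_left (hprod θ' y').integral_prod_left
    (fun u => abs_integral_le_of_forall_abs_le (hr_abs u · y'))
    (fun u => abs_integral_sub_integral_le_mul_dP_add_dist hLr hr_abs hr_lip_v u y y') hδ
    (hZ θ y) (hZ θ' y')).trans_eq ?_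
  ring

theorem stmt_3 {m n : ℕ} (Lr δ rbar : ℝ) (hLr : 0 < Lr) (hδ : 0 < δ)
    (r : Em m → Em n → Em m → Em n → ℝ)
    (lam : Measure (Em m)) [IsProbabilityMeasure lam]
    (hr_meas : Measurable fun p : (Em m × Em n) × Em m × Em n => r p.1.1 p.1.2 p.2.1 p.2.2)
    (hr_nonneg : ∀ u v x y, 0 ≤ r u v x y)
    (hr_bdd : ∀ u v x y, r u v x y ≤ rbar)
    (hr_lip : ∀ u u' v x x' y y',
      |r u v x y - r u' v x' y'| ≤ Lr * (dist u u' + dist x x' + dist y y'))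
    (hlow : ∀ (v : Em n) (x : Em m) (y : Em n), δ⁻¹ ≤ ∫ u, r u v x y ∂lam) :
    ∀ (f : Em m → ℝ), IsLip1 f →
    ∀ (v : Em n) (θ θ' : Measure (Em m)), IsProbabilityMeasure θ → IsProbabilityMeasure θ' →
    ∀ (y y' : Em n),
      |(∫ u, f u * ((∫ x, r u v x y ∂θ) / (∫ u', ∫ x, r u' v x y ∂θ ∂lam)) ∂lam) -
        ∫ u, f u * ((∫ x, r u v x y' ∂θ') / (∫ u', ∫ x, r u' v x y' ∂θ' ∂lam)) ∂lam|
        ≤ δ * (rbar + Lr) * (1 + δ * rbar) * (dP θ θ' + dist y y') :=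
  stmt_3_general Lr δ rbar hLr hδ r lam hr_nonneg hr_bdd hr_lip hlow
end
end

section
/- For the renormalized quantized filter: for all γ, γ' ∈ S^N, y, y' ∈ Y, with Y ∼ ν, E[|Φ_N(Y,γ,y) − Φ_N(Y,γ',y')|] ≤ 2δ(1 + 2 r̄ δ)(r̄ + L_r)[√N |γ − γ'| + |y − y'|], provided ε_N ≤ 1/(2δL_r), where |·| is the Euclidean norm on ℝ^N. -/
open MeasureTheory Set
noncomputable section

/-- `r(u,v,γ,y) = Σ_j γ_j r(u,v,x_N^j,y)` for a probability vector `γ` on the grid `xs`. -/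
noncomputable def rGam {m n N : ℕ} (r : Em m → Em n → Em m → Em n → ℝ)
    (xs : Fin N → Em m) (u : Em m) (v : Em n) (γ : EuclideanSpace ℝ (Fin N)) (y : Em n) : ℝ :=
  ∑ j, γ j * r u v (xs j) y

/-- `r(λ_N,v,γ,y) = Σ_i w_i r(x_N^i,v,γ,y)` with `w` the weights of `λ_N`. -/
noncomputable def rLamN {m n N : ℕ} (r : Em m → Em n → Em m → Em n → ℝ)
    (xs : Fin N → Em m) (w : Fin N → ℝ) (v : Em n)
    (γ : EuclideanSpace ℝ (Fin N)) (y : Em n) : ℝ :=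
  ∑ i, w i * rGam r xs (xs i) v γ y

/-- Quantized filter `Φ_N(v,γ,y) ∈ S^N`, with `j`-th component
`λ_N(x_N^j) r(x_N^j,v,γ,y)/r(λ_N,v,γ,y)`. -/
noncomputable def PhiNs {m n N : ℕ} (r : Em m → Em n → Em m → Em n → ℝ)
    (xs : Fin N → Em m) (w : Fin N → ℝ) (v : Em n)
    (γ : EuclideanSpace ℝ (Fin N)) (y : Em n) : EuclideanSpace ℝ (Fin N) :=
  WithLp.toLp 2 (fun j => w j * rGam r xs (xs j) v γ y / rLamN r xs w v γ y)

/-- `S_N g(γ,y) = E[g(Φ_N(Y,γ,y),Y) r(λ_N,Y,γ,y)/r(λ_N,ν,γ,y)]`, `Y ∼ ν`. -/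
noncomputable def SNs {m n N : ℕ} (r : Em m → Em n → Em m → Em n → ℝ)
    (xs : Fin N → Em m) (w : Fin N → ℝ) (nu : Measure (Em n))
    (g : EuclideanSpace ℝ (Fin N) → Em n → ℝ)
    (γ : EuclideanSpace ℝ (Fin N)) (y : Em n) : ℝ :=
  ∫ v, g (PhiNs r xs w v γ y) v *
    (rLamN r xs w v γ y / ∫ v', rLamN r xs w v' γ y ∂nu) ∂nu

/-- membership in the `N`-simplex -/
def InSimplex {N : ℕ} (γ : EuclideanSpace ℝ (Fin N)) : Prop :=
  (∀ j, 0 ≤ γ j) ∧ (∑ j, γ j) = 1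

/-! Each component of `Φ_N(v,γ,y)` is `λ_N(x^j) · a/R`, where the numerator `a = r(x^j,v,γ,y)` and
the normaliser `R = r(λ_N,v,γ,y)` both move by at most `D = r̄ ‖γ - γ'‖₁ + L_r |y - y'|`. The
normaliser is a quadrature of the `L_r`-Lipschitz function `r(·,v,γ,y)` whose `λ`-integral is at
least `δ⁻¹`, so the quantization error `ε_N ≤ 1/(2δL_r)` keeps it above `(2δ)⁻¹`. Hence each ratio
moves by at most `2δ(1 + 2r̄δ) D`; summing over the weights `λ_N(x^j)` and using
`‖·‖₁ ≤ √N ‖·‖₂` gives a pointwise bound, which integrates against the probability `ν`. -/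

open Finset

section WeightedSum

variable {ι : Type*} [Fintype ι] {β f : ι → ℝ} {c : ℝ}

lemma weighted_sum_le (hβ : ∀ k, 0 ≤ β k) (hβ1 : ∑ k, β k = 1) (hf : ∀ k, f k ≤ c) :
    ∑ k, β k * f k ≤ c :=
  calc ∑ k, β k * f k ≤ ∑ k, β k * c :=
        sum_le_sum fun k _ => mul_le_mul_of_nonneg_left (hf k) (hβ k)
    _ = c := by rw [← sum_mul, hβ1, one_mul]

lemma le_weighted_sum (hβ : ∀ k, 0 ≤ β k) (hβ1 : ∑ k, β k = 1) (hf : ∀ k, c ≤ f k) :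
    c ≤ ∑ k, β k * f k :=
  calc c = ∑ k, β k * c := by rw [← sum_mul, hβ1, one_mul]
    _ ≤ ∑ k, β k * f k := sum_le_sum fun k _ => mul_le_mul_of_nonneg_left (hf k) (hβ k)

lemma abs_weighted_sum_le (hβ : ∀ k, 0 ≤ β k) (hβ1 : ∑ k, β k = 1) (hf : ∀ k, |f k| ≤ c) :
    |∑ k, β k * f k| ≤ c :=
  abs_le.2 ⟨le_weighted_sum hβ hβ1 fun k => (abs_le.1 (hf k)).1,
    weighted_sum_le hβ hβ1 fun k => (abs_le.1 (hf k)).2⟩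

end WeightedSum

section EuclideanNorm

variable {𝕜 ι : Type*} [RCLike 𝕜] [Fintype ι]

lemma EuclideanSpace.norm_le_sum_norm (x : EuclideanSpace 𝕜 ι) : ‖x‖ ≤ ∑ j, ‖x j‖ := by
  rw [EuclideanSpace.norm_eq, Real.sqrt_le_iff]
  exact ⟨by positivity, sum_sq_le_sq_sum_of_nonneg fun j _ => norm_nonneg _⟩

lemma EuclideanSpace.sum_norm_le_sqrt_card_mul_norm (x : EuclideanSpace 𝕜 ι) :
    ∑ j, ‖x j‖ ≤ Real.sqrt (Fintype.card ι) * ‖x‖ := by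
  rw [EuclideanSpace.norm_eq, ← Real.sqrt_mul (Nat.cast_nonneg _),
    Real.le_sqrt (by positivity) (by positivity)]
  exact sq_sum_le_card_mul_sum_sq

end EuclideanNorm

lemma abs_div_sub_div_le {a a' R R' c M D : ℝ} (hc : 0 < c) (hR : c⁻¹ ≤ R) (hR' : c⁻¹ ≤ R')
    (ha' : |a'| ≤ M) (ha : |a - a'| ≤ D) (hRR' : |R - R'| ≤ D) :
    |a / R - a' / R'| ≤ c * (1 + M * c) * D := by
  have hR0 : 0 < R := (inv_pos.2 hc).trans_le hR
  have hR'0 : 0 < R' := (inv_pos.2 hc).trans_le hR'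
  have hRinv : R⁻¹ ≤ c := inv_le_of_inv_le₀ hc hR
  have hR'inv : R'⁻¹ ≤ c := inv_le_of_inv_le₀ hc hR'
  have hM : 0 ≤ M := (abs_nonneg _).trans ha'
  have hD : 0 ≤ D := (abs_nonneg _).trans ha
  have hsplit : a / R - a' / R' = (a - a') * R⁻¹ + a' * (R' - R) * (R⁻¹ * R'⁻¹) := by
    field_simp
    ring
  calc |a / R - a' / R'|
      ≤ |a - a'| * R⁻¹ + |a'| * |R' - R| * (R⁻¹ * R'⁻¹) := by
        rw [hsplit]
        refine (abs_add_le _ _).trans_eq ?_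
        simp only [abs_mul, abs_of_pos hR0, abs_of_pos hR'0, abs_inv]
    _ ≤ D * c + M * D * (c * c) := by
        rw [abs_sub_comm R']
        gcongr
    _ = c * (1 + M * c) * D := by ring

section QuantizedFilter

variable {m n N : ℕ} {r : Em m → Em n → Em m → Em n → ℝ} {xs : Fin N → Em m}
  {w : Fin N → ℝ} {γ γ' : EuclideanSpace ℝ (Fin N)} {rbar Lr : ℝ}

lemma abs_rGam_sub_rGam_left_le
    (hr_lip : ∀ u u' v x x' y y',
      |r u v x y - r u' v x' y'| ≤ Lr * (dist u u' + dist x x' + dist y y'))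
    (hγ : InSimplex γ) (u u' : Em m) (v y : Em n) :
    |rGam r xs u v γ y - rGam r xs u' v γ y| ≤ Lr * dist u u' := by
  rw [rGam, rGam, ← sum_sub_distrib]
  simp only [← mul_sub]
  exact abs_weighted_sum_le hγ.1 hγ.2 fun k => by
    simpa using hr_lip u u' v (xs k) (xs k) y y

lemma abs_rGam_sub_rGam_le (hr_nonneg : ∀ u v x y, 0 ≤ r u v x y)
    (hr_bdd : ∀ u v x y, r u v x y ≤ rbar)
    (hr_lip : ∀ u u' v x x' y y',
      |r u v x y - r u' v x' y'| ≤ Lr * (dist u u' + dist x x' + dist y y'))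
    (hγ' : InSimplex γ') (u : Em m) (v y y' : Em n) :
    |rGam r xs u v γ y - rGam r xs u v γ' y'| ≤
      rbar * ∑ k, |γ k - γ' k| + Lr * dist y y' := by
  have hsplit : rGam r xs u v γ y - rGam r xs u v γ' y' =
      ∑ k, (γ k - γ' k) * r u v (xs k) y + ∑ k, γ' k * (r u v (xs k) y - r u v (xs k) y') := by
    simp only [rGam, ← sum_add_distrib, ← sum_sub_distrib]
    exact sum_congr rfl fun k _ => by ring
  have hγterm : |∑ k, (γ k - γ' k) * r u v (xs k) y| ≤ rbar * ∑ k, |γ k - γ' k| :=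
    calc _ ≤ ∑ k, |γ k - γ' k| * rbar := by
          refine (abs_sum_le_sum_abs _ _).trans (sum_le_sum fun k _ => ?_)
          rw [abs_mul, abs_of_nonneg (hr_nonneg _ _ _ _)]
          exact mul_le_mul_of_nonneg_left (hr_bdd _ _ _ _) (abs_nonneg _)
      _ = _ := by rw [← sum_mul, mul_comm]
  have hyterm : |∑ k, γ' k * (r u v (xs k) y - r u v (xs k) y')| ≤ Lr * dist y y' :=
    abs_weighted_sum_le hγ'.1 hγ'.2 fun k => by simpa using hr_lip u u v (xs k) (xs k) y y'
  rw [hsplit]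
  exact (abs_add_le _ _).trans (add_le_add hγterm hyterm)

lemma abs_rLamN_sub_rLamN_le (hw : ∀ i, 0 ≤ w i) (hws : ∑ i, w i = 1)
    (hr_nonneg : ∀ u v x y, 0 ≤ r u v x y)
    (hr_bdd : ∀ u v x y, r u v x y ≤ rbar)
    (hr_lip : ∀ u u' v x x' y y',
      |r u v x y - r u' v x' y'| ≤ Lr * (dist u u' + dist x x' + dist y y'))
    (hγ' : InSimplex γ') (v y y' : Em n) :
    |rLamN r xs w v γ y - rLamN r xs w v γ' y'| ≤
      rbar * ∑ k, |γ k - γ' k| + Lr * dist y y' := by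
  rw [rLamN, rLamN, ← sum_sub_distrib]
  simp only [← mul_sub]
  exact abs_weighted_sum_le hw hws fun i =>
    abs_rGam_sub_rGam_le hr_nonneg hr_bdd hr_lip hγ' (xs i) v y y'

lemma inv_le_integral_rGam {δ : ℝ} (hδ : 0 < δ) {lam : Measure (Em m)}
    (hlow : ∀ (v : Em n) (x : Em m) (y : Em n), δ⁻¹ ≤ ∫ u, r u v x y ∂lam)
    (hγ : InSimplex γ) (v y : Em n) :
    δ⁻¹ ≤ ∫ u, rGam r xs u v γ y ∂lam := by
  -- a non-integrable `r` would have integral `0 < δ⁻¹`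
  have hint : ∀ x, Integrable (fun u => r u v x y) lam := fun x =>
    Integrable.of_integral_ne_zero ((inv_pos.2 hδ).trans_le (hlow v x y)).ne'
  have hlin : ∫ u, rGam r xs u v γ y ∂lam = ∑ k, γ k * ∫ u, r u v (xs k) y ∂lam := by
    simp only [rGam]
    rw [integral_finsetSum _ fun k _ => (hint (xs k)).const_mul (γ k)]
    simp only [integral_const_mul]
  rw [hlin]
  exact le_weighted_sum hγ.1 hγ.2 fun k => hlow v (xs k) y

lemma abs_integral_rGam_sub_rLamN_le {εN : ℝ} (hLr : 0 < Lr) {lam : Measure (Em m)}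
    (hr_lip : ∀ u u' v x x' y y',
      |r u v x y - r u' v x' y'| ≤ Lr * (dist u u' + dist x x' + dist y y'))
    (hW : ∀ f : Em m → ℝ, (∀ a b, |f a - f b| ≤ dist a b) →
      |(∫ u, f u ∂lam) - ∑ i, w i * f (xs i)| ≤ εN)
    (hγ : InSimplex γ) (v y : Em n) :
    |(∫ u, rGam r xs u v γ y ∂lam) - rLamN r xs w v γ y| ≤ Lr * εN := by
  have hf : ∀ a b, |Lr⁻¹ * rGam r xs a v γ y - Lr⁻¹ * rGam r xs b v γ y| ≤ dist a b := by
    intro a b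
    rw [← mul_sub, abs_mul, abs_of_pos (inv_pos.2 hLr), inv_mul_le_iff₀ hLr]
    exact abs_rGam_sub_rGam_left_le hr_lip hγ a b v y
  have hq := hW _ hf
  simp only [integral_const_mul, mul_left_comm (w _), ← mul_sum, ← mul_sub, abs_mul,
    abs_of_pos (inv_pos.2 hLr), inv_mul_le_iff₀ hLr] at hq
  exact hq

lemma inv_two_mul_le_rLamN {δ εN : ℝ} (hδ : 0 < δ) (hLr : 0 < Lr) {lam : Measure (Em m)}
    (hr_lip : ∀ u u' v x x' y y',
      |r u v x y - r u' v x' y'| ≤ Lr * (dist u u' + dist x x' + dist y y'))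
    (hlow : ∀ (v : Em n) (x : Em m) (y : Em n), δ⁻¹ ≤ ∫ u, r u v x y ∂lam)
    (hW : ∀ f : Em m → ℝ, (∀ a b, |f a - f b| ≤ dist a b) →
      |(∫ u, f u ∂lam) - ∑ i, w i * f (xs i)| ≤ εN)
    (hεN : εN ≤ 1 / (2 * δ * Lr)) (hγ : InSimplex γ) (v y : Em n) :
    (2 * δ)⁻¹ ≤ rLamN r xs w v γ y := by
  have hint := inv_le_integral_rGam (xs := xs) hδ hlow hγ v y
  have hquant := abs_integral_rGam_sub_rLamN_le hLr hr_lip hW hγ v y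
  have hLrεN : Lr * εN ≤ (2 * δ)⁻¹ :=
    calc Lr * εN ≤ Lr * (1 / (2 * δ * Lr)) := mul_le_mul_of_nonneg_left hεN hLr.le
      _ = (2 * δ)⁻¹ := by field_simp
  have hhalf : δ⁻¹ - (2 * δ)⁻¹ = (2 * δ)⁻¹ := by field_simp; ring
  linarith [(abs_le.1 (hquant.trans hLrεN)).2]

lemma norm_PhiNs_sub_PhiNs_le {c : ℝ} (hc : 0 < c) (hw : ∀ i, 0 ≤ w i) (hws : ∑ i, w i = 1)
    (hr_nonneg : ∀ u v x y, 0 ≤ r u v x y)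
    (hr_bdd : ∀ u v x y, r u v x y ≤ rbar)
    (hr_lip : ∀ u u' v x x' y y',
      |r u v x y - r u' v x' y'| ≤ Lr * (dist u u' + dist x x' + dist y y'))
    (hγ' : InSimplex γ') {v y y' : Em n}
    (hR : c⁻¹ ≤ rLamN r xs w v γ y) (hR' : c⁻¹ ≤ rLamN r xs w v γ' y') :
    ‖PhiNs r xs w v γ y - PhiNs r xs w v γ' y'‖ ≤
      c * (1 + rbar * c) * (rbar * ∑ k, |γ k - γ' k| + Lr * dist y y') := by
  set D := rbar * ∑ k, |γ k - γ' k| + Lr * dist y y'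
  have hcomp : ∀ j, ‖(PhiNs r xs w v γ y - PhiNs r xs w v γ' y') j‖ ≤
      w j * (c * (1 + rbar * c) * D) := by
    intro j
    have ha' : |rGam r xs (xs j) v γ' y'| ≤ rbar := by
      rw [rGam, abs_of_nonneg (sum_nonneg fun k _ => mul_nonneg (hγ'.1 k) (hr_nonneg _ _ _ _))]
      exact weighted_sum_le hγ'.1 hγ'.2 fun k => hr_bdd _ _ _ _
    rw [PiLp.sub_apply, Real.norm_eq_abs]
    simp only [PhiNs, PiLp.toLp_apply, mul_div_assoc, ← mul_sub, abs_mul, abs_of_nonneg (hw j)]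
    exact mul_le_mul_of_nonneg_left (abs_div_sub_div_le hc hR hR' ha'
      (abs_rGam_sub_rGam_le hr_nonneg hr_bdd hr_lip hγ' _ v y y')
      (abs_rLamN_sub_rLamN_le hw hws hr_nonneg hr_bdd hr_lip hγ' v y y')) (hw j)
  calc _ ≤ ∑ j, ‖(PhiNs r xs w v γ y - PhiNs r xs w v γ' y') j‖ :=
        EuclideanSpace.norm_le_sum_norm _
    _ ≤ ∑ j, w j * (c * (1 + rbar * c) * D) := sum_le_sum fun j _ => hcomp j
    _ = c * (1 + rbar * c) * D := by rw [← sum_mul, hws, one_mul]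

end QuantizedFilter

theorem stmt_10_general {m n N : ℕ} (Lr δ rbar εN : ℝ) (hLr : 0 < Lr) (hδ : 0 < δ)
    (r : Em m → Em n → Em m → Em n → ℝ)
    (lam : Measure (Em m)) (nu : Measure (Em n))
    [IsProbabilityMeasure nu]
    (xs : Fin N → Em m) (w : Fin N → ℝ) (hw : ∀ i, 0 ≤ w i) (hws : (∑ i, w i) = 1)
    (hr_nonneg : ∀ u v x y, 0 ≤ r u v x y)
    (hr_bdd : ∀ u v x y, r u v x y ≤ rbar)
    (hr_lip : ∀ u u' v x x' y y',
      |r u v x y - r u' v x' y'| ≤ Lr * (dist u u' + dist x x' + dist y y'))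
    (hlow : ∀ (v : Em n) (x : Em m) (y : Em n), δ⁻¹ ≤ ∫ u, r u v x y ∂lam)
    (hW : ∀ f : Em m → ℝ, (∀ a b, |f a - f b| ≤ dist a b) →
      |(∫ u, f u ∂lam) - ∑ i, w i * f (xs i)| ≤ εN)
    (hεN : εN ≤ 1 / (2 * δ * Lr)) :
    ∀ (γ γ' : EuclideanSpace ℝ (Fin N)) (y y' : Em n), InSimplex γ → InSimplex γ' →
      (∫ v, ‖PhiNs r xs w v γ y - PhiNs r xs w v γ' y'‖ ∂nu) ≤
        2 * δ * (1 + 2 * rbar * δ) * (rbar + Lr) *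
          (Real.sqrt N * ‖γ - γ'‖ + dist y y') := by
  intro γ γ' y y' hγ hγ'
  have hrbar : 0 ≤ rbar := (hr_nonneg 0 0 0 0).trans (hr_bdd 0 0 0 0)
  have hℓ1 : ∑ k, |γ k - γ' k| ≤ Real.sqrt N * ‖γ - γ'‖ := by
    simpa [Real.norm_eq_abs] using EuclideanSpace.sum_norm_le_sqrt_card_mul_norm (γ - γ')
  have hD : rbar * ∑ k, |γ k - γ' k| + Lr * dist y y' ≤
      (rbar + Lr) * (Real.sqrt N * ‖γ - γ'‖ + dist y y') := by
    nlinarith [mul_le_mul_of_nonneg_left hℓ1 hrbar, dist_nonneg (x := y) (y := y'),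
      mul_nonneg hLr.le (by positivity : 0 ≤ Real.sqrt N * ‖γ - γ'‖)]
  have hpt : ∀ v, ‖PhiNs r xs w v γ y - PhiNs r xs w v γ' y'‖ ≤
      2 * δ * (1 + 2 * rbar * δ) * (rbar + Lr) * (Real.sqrt N * ‖γ - γ'‖ + dist y y') := by
    intro v
    calc _ ≤ 2 * δ * (1 + rbar * (2 * δ)) * (rbar * ∑ k, |γ k - γ' k| + Lr * dist y y') :=
          norm_PhiNs_sub_PhiNs_le (by positivity) hw hws hr_nonneg hr_bdd hr_lip hγ'
            (inv_two_mul_le_rLamN hδ hLr hr_lip hlow hW hεN hγ v y)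
            (inv_two_mul_le_rLamN hδ hLr hr_lip hlow hW hεN hγ' v y')
      _ ≤ _ := by
          nlinarith [mul_le_mul_of_nonneg_left hD (by positivity : 0 ≤ 2 * δ * (1 + 2 * rbar * δ))]
  calc _ ≤ ‖∫ v, ‖PhiNs r xs w v γ y - PhiNs r xs w v γ' y'‖ ∂nu‖ := le_abs_self _
    _ ≤ _ * nu.real univ :=
        norm_integral_le_of_norm_le_const (ae_of_all _ fun v => (norm_norm _).trans_le (hpt v))
    _ = _ := by rw [probReal_univ, mul_one]

theorem stmt_10 {m n N : ℕ} (Lr δ rbar εN : ℝ) (hLr : 0 < Lr) (hδ : 0 < δ)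
    (r : Em m → Em n → Em m → Em n → ℝ)
    (lam : Measure (Em m)) (nu : Measure (Em n))
    [IsProbabilityMeasure lam] [IsProbabilityMeasure nu]
    (xs : Fin N → Em m) (w : Fin N → ℝ) (hw : ∀ i, 0 ≤ w i) (hws : (∑ i, w i) = 1)
    (hr_meas : Measurable fun p : (Em m × Em n) × Em m × Em n => r p.1.1 p.1.2 p.2.1 p.2.2)
    (hr_nonneg : ∀ u v x y, 0 ≤ r u v x y)
    (hr_bdd : ∀ u v x y, r u v x y ≤ rbar)
    (hr_lip : ∀ u u' v x x' y y',
      |r u v x y - r u' v x' y'| ≤ Lr * (dist u u' + dist x x' + dist y y'))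
    (hlow : ∀ (v : Em n) (x : Em m) (y : Em n), δ⁻¹ ≤ ∫ u, r u v x y ∂lam)
    (hW : ∀ f : Em m → ℝ, (∀ a b, |f a - f b| ≤ dist a b) →
      |(∫ u, f u ∂lam) - ∑ i, w i * f (xs i)| ≤ εN)
    (hεN : εN ≤ 1 / (2 * δ * Lr)) :
    ∀ (γ γ' : EuclideanSpace ℝ (Fin N)) (y y' : Em n), InSimplex γ → InSimplex γ' →
      (∫ v, ‖PhiNs r xs w v γ y - PhiNs r xs w v γ' y'‖ ∂nu) ≤
        2 * δ * (1 + 2 * rbar * δ) * (rbar + Lr) *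
          (Real.sqrt N * ‖γ - γ'‖ + dist y y') :=
  stmt_10_general Lr δ rbar εN hLr hδ r lam nu xs w hw hws hr_nonneg hr_bdd hr_lip hlow hW hεN
end
end

section
/- In the water tank example, if F(K) < 1, G(0) < 1, G(−K) > 0 and the density g is bounded below by 𝔤 > 0 on [−K,K], then the integrated density satisfies r(λ,v,x₁,x₂,y) ≥ (1 − F(K)) · min{4G(−K), 2K𝔤, 4(1 − G(0))} > 0 for all v, y ∈ [0,K] and (x₁,x₂) in the augmented state space, i.e., the lower-bound Assumption C holds with δ⁻¹ equal to this constant. -/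
open MeasureTheory Set
noncomputable section

theorem stmt_18 (K : ℝ) (hK : 0 < K) (f g F G : ℝ → ℝ) (gl : ℝ)
    (hgl : 0 < gl) (hglow : ∀ t ∈ Icc (-K) K, gl ≤ g t)
    (hf0 : ∀ t, 0 ≤ f t) (hg0 : ∀ t, 0 ≤ g t)
    (hF01 : ∀ t, F t ∈ Icc (0 : ℝ) 1) (hG01 : ∀ t, G t ∈ Icc (0 : ℝ) 1)
    (hFmono : Monotone F)
    (hFK : F K < 1) (hG0 : G 0 < 1) (hGK : 0 < G (-K)) :
    -- the observation density factors m₁, m₂, m₃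
    let m1 : ℝ → ℝ := fun v => (if v = 0 then 4 * G 0 else 0) +
      (if v ∈ Ioo 0 K then 2 * K * g v else 0) + (if v = K then 4 * (1 - G K) else 0)
    let m2 : ℝ → ℝ → ℝ := fun u v => (if v = 0 then 4 * G (-u) else 0) +
      (if v ∈ Ioo 0 K then 2 * K * g (v - u) else 0) +
      (if v = K then 4 * (1 - G (K - u)) else 0)
    let m3 : ℝ → ℝ := fun v => (if v = 0 then 4 * G (-K) else 0) +
      (if v ∈ Ioo 0 K then 2 * K * g (v - K) else 0) + (if v = K then 4 * (1 - G 0) else 0)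
    -- the transition density r on the augmented state space
    let r : ℝ → ℝ → ℝ → ℝ → ℝ → ℝ → ℝ := fun u₁ u₂ v x₁ _x₂ _y =>
      (if u₁ = 0 ∧ u₂ = -1 then 4 * F (-x₁) * m1 v else 0) +
      (if u₁ ∈ Ioo 0 K ∧ u₂ = 0 then 2 * K * f (u₁ - x₁) * m2 u₁ v else 0) +
      (if u₁ = K ∧ u₂ = 1 then 4 * (1 - F (K - x₁)) * m3 v else 0)
    -- the reference measure λ on the augmented unobserved state space
    let lam : Measure (ℝ × ℝ) :=
      ((1 : ENNReal) / 4) • Measure.dirac ((0 : ℝ), (-1 : ℝ)) +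
      ENNReal.ofReal (1 / (2 * K)) •
        Measure.map (fun u₁ => (u₁, (0 : ℝ))) (volume.restrict (Icc 0 K)) +
      ((1 : ENNReal) / 4) • Measure.dirac ((K : ℝ), (1 : ℝ))
    -- the augmented state space 𝕏
    let XS : Set (ℝ × ℝ) := (Ioo 0 K ×ˢ {(0 : ℝ)}) ∪ {((0 : ℝ), (-1 : ℝ))} ∪ {(K, (1 : ℝ))}
    ∀ v ∈ Icc (0 : ℝ) K, ∀ x : ℝ × ℝ, x ∈ XS → ∀ y : ℝ,
      ENNReal.ofReal
          ((1 - F K) * min (min (4 * G (-K)) (2 * K * gl)) (4 * (1 - G 0))) ≤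
        (∫⁻ p : ℝ × ℝ, ENNReal.ofReal (r p.1 p.2 v x.1 x.2 y) ∂lam) ∧
      0 < (1 - F K) * min (min (4 * G (-K)) (2 * K * gl)) (4 * (1 - G 0)) := by
  intro m1 m2 m3 r lam XS v hv x hx y
  set C : ℝ := min (min (4 * G (-K)) (2 * K * gl)) (4 * (1 - G 0)) with hC
  have hCpos : 0 < C := by
    refine lt_min (lt_min (by linarith) (by positivity)) (by linarith)
  have hFKpos : 0 < 1 - F K := by linarith
  have hx1 : 0 ≤ x.1 := by
    rcases hx with (h | h) | h
    · exact (h.1.1).le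
    · simp only [mem_singleton_iff] at h; rw [h]
    · simp only [mem_singleton_iff] at h; rw [h]; exact hK.le
  have hFx : F (K - x.1) ≤ F K := hFmono (by linarith)
  have hm3 : C ≤ m3 v := by
    rcases eq_or_lt_of_le hv.1 with h0 | h0
    · have : m3 v = 4 * G (-K) := by
        simp only [m3, ← h0]
        have h1 : ¬ ((0:ℝ) ∈ Ioo 0 K) := by simp
        have h2 : (0:ℝ) ≠ K := hK.ne
        simp [h1, h2]
      rw [this]; exact (min_le_left _ _).trans (min_le_left _ _)
    rcases eq_or_lt_of_le hv.2 with hKv | hKv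
    · have : m3 v = 4 * (1 - G 0) := by
        have h1 : v ≠ 0 := by linarith
        have h2 : ¬ (v ∈ Ioo 0 K) := by simp [hKv, lt_irrefl]
        simp [m3, h1, h2, hKv]
        exact fun h => absurd h hK.ne'
      rw [this]; exact min_le_right _ _
    · have hvI : v ∈ Ioo 0 K := ⟨h0, hKv⟩
      have : m3 v = 2 * K * g (v - K) := by
        simp [m3, hvI, h0.ne', hKv.ne]
        exact fun h => absurd (h h0) (not_le.2 hKv)
      rw [this]
      have hg : gl ≤ g (v - K) := hglow _ ⟨by linarith [hv.2], by linarith [hv.1]⟩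
      calc C ≤ 2 * K * gl := (min_le_left _ _).trans (min_le_right _ _)
        _ ≤ 2 * K * g (v - K) := by nlinarith
  have hrval : r K 1 v x.1 x.2 y = 4 * (1 - F (K - x.1)) * m3 v := by
    simp [r, hK.ne', hK.not_gt, lt_irrefl]
  constructor
  · have hle : ((1:ENNReal)/4) • Measure.dirac ((K:ℝ), (1:ℝ)) ≤ lam :=
      Measure.le_add_left le_rfl
    calc ENNReal.ofReal ((1 - F K) * C)
        ≤ ∫⁻ p : ℝ × ℝ, ENNReal.ofReal (r p.1 p.2 v x.1 x.2 y)
            ∂(((1:ENNReal)/4) • Measure.dirac ((K:ℝ), (1:ℝ))) := by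
          rw [lintegral_smul_measure, lintegral_dirac, hrval]
          have h1 : 4 * ((1 - F K) * C) ≤ 4 * (1 - F (K - x.1)) * m3 v := by
            have h2 : (1 - F K) * C ≤ (1 - F (K - x.1)) * m3 v := by
              apply mul_le_mul (by linarith) hm3 hCpos.le (by linarith)
            linarith
          have h4 : ENNReal.ofReal (4 * ((1 - F K) * C)) =
              4 * ENNReal.ofReal ((1 - F K) * C) := by
            rw [ENNReal.ofReal_mul (by norm_num : (0:ℝ) ≤ 4)]
            norm_num
          calc ENNReal.ofReal ((1 - F K) * C)
              = (1/4 : ENNReal) * ENNReal.ofReal (4 * ((1 - F K) * C)) := by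
                rw [h4, ← mul_assoc, one_div,
                  ENNReal.inv_mul_cancel (by norm_num) (by norm_num), one_mul]
            _ ≤ (1/4 : ENNReal) * ENNReal.ofReal (4 * (1 - F (K - x.1)) * m3 v) :=
                mul_le_mul_right (ENNReal.ofReal_le_ofReal h1) _
      _ ≤ ∫⁻ p : ℝ × ℝ, ENNReal.ofReal (r p.1 p.2 v x.1 x.2 y) ∂lam :=
          lintegral_mono' hle le_rfl
  · exact mul_pos hFKpos hCpos
end
end
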